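/- arXiv:2302.05013 — 2 statements merged into one kernel-verified Lean document; each statement's English description precedes it below -/
import Mathlib

section
/- Let Ω be a bounded domain in ℂⁿ, ψ ∈ C(cl(Ω)), φ ∈ L^∞(Ω), and h : Ω → (0,∞) a continuous function. If the Toeplitz operator T_φ is compact on A²(Ω,h), then the Toeplitz operator T_{φψ} is compact on A²(Ω,h). -/
open MeasureTheory Metric Complex Bornology
open scoped ENNReal NNReal ComplexConjugate

noncomputable section

/-- `ℂⁿ` as a Euclidean (Hermitian) space. -/
abbrev CE (n : ℕ) : Type := EuclideanSpace ℂ (Fin n)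

instance (n : ℕ) : MeasurableSpace (CE n) := MeasurableSpace.comap WithLp.ofLp MeasurableSpace.pi

instance (n : ℕ) : BorelSpace (CE n) := PiLp.borelSpace 2 (X := fun _ : Fin n => ℂ)

/-- Lebesgue measure on `ℂⁿ`. -/
instance (n : ℕ) : MeasureSpace (CE n) := ⟨(Measure.pi fun _ => volume).map (MeasurableEquiv.toLp 2 (Fin n → ℂ))⟩

/-- A function is plurisubharmonic on a set if it is upper semicontinuous there and
satisfies the sub-mean value inequality on circles in every complex line. -/
def PlurisubharmonicOn {n : ℕ} (u : CE n → ℝ) (s : Set (CE n)) : Prop :=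
  UpperSemicontinuousOn u s ∧
    ∀ a b : CE n, ∀ R : ℝ, 0 < R →
      (∀ t : ℂ, ‖t‖ ≤ R → a + t • b ∈ s) →
      u a ≤ (2 * Real.pi)⁻¹ *
        ∫ θ in (0:ℝ)..(2 * Real.pi), u (a + ((R : ℂ) * Complex.exp (θ * Complex.I)) • b)

/-- A domain `Ω ⊆ ℂⁿ` is pseudoconvex if `-log dist(·, bΩ)` is plurisubharmonic on `Ω`. -/
def Pseudoconvex {n : ℕ} (Ω : Set (CE n)) : Prop :=
  PlurisubharmonicOn (fun z => -Real.log (infDist z Ωᶜ)) Ω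

/-- A bounded domain has Lipschitz boundary if near each boundary point, after choosing a unit
direction `ν`, the domain is the strict subgraph of a Lipschitz function over the real
hyperplane orthogonal to `ν`. -/
def HasLipschitzBoundary {n : ℕ} (Ω : Set (CE n)) : Prop :=
  ∀ p ∈ frontier Ω, ∃ ν : CE n, ‖ν‖ = 1 ∧ ∃ ε > 0, ∃ (L : NNReal) (ψ : CE n → ℝ),
    LipschitzWith L ψ ∧
      ∀ x ∈ ball p ε, (x ∈ Ω ↔ (inner ℂ x ν : ℂ).re < ψ (x - ((inner ℂ x ν : ℂ).re • ν)))

/-- A Lipschitz defining function for `Ω`: a (globally) Lipschitz function with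
`Ω = {ρ < 0}` which is comparable to the negative boundary distance on `Ω`. -/
def IsLipschitzDefiningFunction {n : ℕ} (Ω : Set (CE n)) (ρ : CE n → ℝ) : Prop :=
  (∃ L : NNReal, LipschitzWith L ρ) ∧ Ω = {z | ρ z < 0} ∧
    ∃ c C : ℝ, 0 < c ∧ 0 < C ∧
      ∀ z ∈ Ω, c * infDist z Ωᶜ ≤ -ρ z ∧ -ρ z ≤ C * infDist z Ωᶜ

/-- The measure `h dV` on `Ω ⊆ ℂⁿ`; `L²(Ω, h)` is `Lp ℂ 2` of this measure. -/
def wMeasure {n : ℕ} (Ω : Set (CE n)) (h : CE n → ℝ) : Measure (CE n) :=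
  (volume.restrict Ω).withDensity fun z => ENNReal.ofReal (h z)

/-- An element of `L²(Ω, h)` belongs to the Bergman space `A²(Ω, h)` if it has a
representative holomorphic on `Ω`. -/
def IsBergmanFun {n : ℕ} (Ω : Set (CE n)) (μ : Measure (CE n)) (f : Lp ℂ 2 μ) : Prop :=
  ∃ g : CE n → ℂ, DifferentiableOn ℂ g Ω ∧ ∀ᵐ z ∂μ, f z = g z

/-- The Bergman space `A²(Ω, h)` as a subset of `L²(Ω, h)`. -/
def bergmanSet {n : ℕ} (Ω : Set (CE n)) (μ : Measure (CE n)) : Set (Lp ℂ 2 μ) :=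
  {f | IsBergmanFun Ω μ f}

/-- `P` is the Bergman projection: the orthogonal projection of `L²(Ω, h)` onto `A²(Ω, h)`. -/
def IsBergmanProjection {n : ℕ} (Ω : Set (CE n)) (μ : Measure (CE n))
    (P : Lp ℂ 2 μ →L[ℂ] Lp ℂ 2 μ) : Prop :=
  (∀ f, IsBergmanFun Ω μ (P f)) ∧ (∀ f, IsBergmanFun Ω μ f → P f = f) ∧
    ∀ f g : Lp ℂ 2 μ, IsBergmanFun Ω μ g → (inner ℂ (f - P f) g : ℂ) = 0

/-- `M` is the operator of multiplication by `φ` on `L²(Ω, h)`. -/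
def IsMultiplicationOp {n : ℕ} (μ : Measure (CE n)) (φ : CE n → ℂ)
    (M : Lp ℂ 2 μ →L[ℂ] Lp ℂ 2 μ) : Prop :=
  ∀ f : Lp ℂ 2 μ, (M f : CE n → ℂ) =ᵐ[μ] fun z => φ z * f z

/-- A (bounded linear) map `T` is a compact operator on the subspace `A` if the image
of the unit ball of `A` is relatively compact. -/
def CompactOnSet {H K : Type*} [NormedAddCommGroup H] [NormedAddCommGroup K]
    (T : H → K) (A : Set H) : Prop :=
  IsCompact (closure (T '' (A ∩ Metric.closedBall 0 1)))

/-!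
For `w, v` holomorphic and bounded on `Ω`, put `y = T_{φ w̄ v} f`. Since `y` and `w y` lie in
`A²(Ω, h)`, `‖y‖² = ⟪φ w̄ v f, y⟫ = ⟪φ v f, w y⟫ = ⟪T_φ (v f), w y⟫ ≤ ‖w‖∞ ‖T_φ (v f)‖ ‖y‖`,
so `T_{φ w̄ v}` is dominated by the compact operator `T_φ ∘ M_v` and is compact.
The symbols `q ∈ C(cl Ω)` with `T_{φ q}` compact form a closed subspace, because compact
operators form a closed subspace and `q ↦ T_{φ q}` is continuous for the sup norm; it contains
the monomials `z̄^α z^β`, which span a dense subspace by Stone–Weierstrass. Hence it contains `ψ`.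
-/

section Multiplication

variable {α : Type*} [MeasurableSpace α]

variable (μ : Measure α) in
def mulL : Lp ℂ ∞ μ →L[ℂ] Lp ℂ 2 μ →L[ℂ] Lp ℂ 2 μ :=
  (ContinuousLinearMap.lsmul ℂ ℂ).holderL μ ∞ 2 2

variable {μ : Measure α}

lemma coeFn_mulL (g : Lp ℂ ∞ μ) (f : Lp ℂ 2 μ) : mulL μ g f =ᵐ[μ] fun x => g x * f x :=
  (ContinuousLinearMap.lsmul ℂ ℂ).coeFn_holder g f

lemma norm_mulL_apply_le (g : Lp ℂ ∞ μ) (f : Lp ℂ 2 μ) : ‖mulL μ g f‖ ≤ ‖g‖ * ‖f‖ := by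
  refine ((ContinuousLinearMap.lsmul ℂ ℂ).norm_holder_apply_apply_le g f).trans ?_
  rw [mul_assoc]
  exact mul_le_of_le_one_left (by positivity) ContinuousLinearMap.opNorm_lsmul_le

end Multiplication

section ExtendByZero

variable {X : Type*} [TopologicalSpace X] {K : Set X}

open scoped Classical in
def extendByZero (q : C(K, ℂ)) (x : X) : ℂ := if hx : x ∈ K then q ⟨x, hx⟩ else 0

lemma extendByZero_of_mem (q : C(K, ℂ)) {x : X} (hx : x ∈ K) : extendByZero q x = q ⟨x, hx⟩ :=
  dif_pos hx

lemma norm_extendByZero_le [CompactSpace K] (q : C(K, ℂ)) (x : X) : ‖extendByZero q x‖ ≤ ‖q‖ := by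
  unfold extendByZero
  split_ifs
  · exact q.norm_coe_le_norm _
  · simp

lemma measurable_extendByZero [MeasurableSpace X] [OpensMeasurableSpace X]
    (hK : MeasurableSet K) (q : C(K, ℂ)) : Measurable (extendByZero q) := by
  classical
  exact Measurable.dite q.continuous.measurable measurable_const hK

variable [MeasurableSpace X] [OpensMeasurableSpace X] [CompactSpace K] {μ : Measure X}

lemma memLp_extendByZero (hK : MeasurableSet K) (q : C(K, ℂ)) :
    MemLp (extendByZero q) ∞ μ :=
  memLp_top_of_bound (measurable_extendByZero hK q).aestronglyMeasurable ‖q‖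
    (ae_of_all _ (norm_extendByZero_le q))

variable (μ) in
def toLinfty (hK : MeasurableSet K) : C(K, ℂ) →L[ℂ] Lp ℂ ∞ μ :=
  LinearMap.mkContinuous
    { toFun q := (memLp_extendByZero hK q).toLp
      map_add' q q' := by
        rw [← MemLp.toLp_add]
        congr 1
        ext x
        by_cases hx : x ∈ K <;> simp [extendByZero, hx]
      map_smul' c q := by
        rw [← MemLp.toLp_const_smul]
        congr 1
        ext x
        by_cases hx : x ∈ K <;> simp [extendByZero, hx] }
    1 fun q => by
      rw [one_mul, LinearMap.coe_mk, AddHom.coe_mk, Lp.norm_toLp, eLpNorm_exponent_top]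
      exact ENNReal.toReal_le_of_le_ofReal (norm_nonneg q)
        (eLpNormEssSup_le_of_ae_bound (ae_of_all _ (norm_extendByZero_le q)))

lemma toLinfty_ae_eq (hK : MeasurableSet K) (hμK : ∀ᵐ x ∂μ, x ∈ K) {q : C(K, ℂ)} {f : X → ℂ}
    (hqf : ∀ x : K, q x = f x) : toLinfty μ hK q =ᵐ[μ] f := by
  filter_upwards [(memLp_extendByZero hK q).coeFn_toLp, hμK] with x hx hxK
  rw [toLinfty, LinearMap.mkContinuous_apply, LinearMap.coe_mk, AddHom.coe_mk, hx,
    extendByZero_of_mem q hxK, hqf]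

end ExtendByZero

lemma TotallyBounded.image_of_dist_le {β E F : Type*} [PseudoMetricSpace E]
    [PseudoMetricSpace F] {s : Set β} {f : β → E} {g : β → F} {C : ℝ}
    (hg : TotallyBounded (g '' s))
    (hfg : ∀ x ∈ s, ∀ y ∈ s, dist (f x) (f y) ≤ C * dist (g x) (g y)) :
    TotallyBounded (f '' s) := by
  rw [Metric.totallyBounded_iff]
  intro ε hε
  set δ := ε / (|C| + 1)
  obtain ⟨t, hts, htfin, hcover⟩ := finite_approx_of_totallyBounded hg δ (by positivity)
  obtain ⟨u, hus, hufin, hcover⟩ := Set.exists_subset_image_finite_and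
    (p := fun t => g '' s ⊆ ⋃ y ∈ t, ball y δ) |>.mp ⟨t, hts, htfin, hcover⟩
  refine ⟨f '' u, hufin.image f, ?_⟩
  rintro _ ⟨x, hx, rfl⟩
  obtain ⟨_, ⟨y, hyu, rfl⟩, hxy⟩ := Set.mem_iUnion₂.mp (hcover ⟨x, hx, rfl⟩)
  refine Set.mem_iUnion₂.mpr ⟨f y, Set.mem_image_of_mem f hyu, ?_⟩
  calc dist (f x) (f y) ≤ |C| * dist (g x) (g y) :=
        (hfg x hx y (hus hyu)).trans (mul_le_mul_of_nonneg_right (le_abs_self C) dist_nonneg)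
    _ ≤ |C| * δ := mul_le_mul_of_nonneg_left (mem_ball.mp hxy).le (abs_nonneg C)
    _ < (|C| + 1) * δ := by gcongr; linarith
    _ = ε := mul_div_cancel₀ ε (by positivity)

lemma IsCompactOperator.of_norm_le {𝕜 E F G : Type*} [NontriviallyNormedField 𝕜]
    [SeminormedAddCommGroup E] [NormedSpace 𝕜 E] [NormedAddCommGroup F] [NormedSpace 𝕜 F]
    [CompleteSpace F] [NormedAddCommGroup G] [NormedSpace 𝕜 G]
    {S : E →ₗ[𝕜] F} {R : E →ₗ[𝕜] G} (hR : IsCompactOperator R) (C : ℝ)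
    (hSR : ∀ x, ‖S x‖ ≤ C * ‖R x‖) : IsCompactOperator S := by
  rw [isCompactOperator_iff_isCompact_closure_image_closedBall S one_pos]
  refine (TotallyBounded.closure ?_).isCompact_of_isClosed isClosed_closure
  refine ((hR.isCompact_closure_image_closedBall 1).totallyBounded.subset subset_closure
    ).image_of_dist_le (C := C) fun x _ y _ => ?_
  simpa only [dist_eq_norm, ← map_sub] using hSR (x - y)

/-- `L ↦ T ∘L L ∘L ι`. -/
def ContinuousLinearMap.sandwichL {𝕜 E F G : Type*} [NontriviallyNormedField 𝕜]
    [SeminormedAddCommGroup E] [NormedSpace 𝕜 E] [SeminormedAddCommGroup F] [NormedSpace 𝕜 F]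
    [SeminormedAddCommGroup G] [NormedSpace 𝕜 G] (T : F →L[𝕜] G) (ι : E →L[𝕜] F) :
    (F →L[𝕜] F) →L[𝕜] E →L[𝕜] G :=
  ContinuousLinearMap.compL 𝕜 E F G T ∘L (ContinuousLinearMap.compL 𝕜 E F F).flip ι

section Bergman

variable {n : ℕ} {Ω : Set (CE n)} {μ : Measure (CE n)}

lemma IsBergmanFun.add {f g : Lp ℂ 2 μ} (hf : IsBergmanFun Ω μ f) (hg : IsBergmanFun Ω μ g) :
    IsBergmanFun Ω μ (f + g) := by
  obtain ⟨F, hF, hfF⟩ := hf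
  obtain ⟨G, hG, hgG⟩ := hg
  refine ⟨F + G, hF.add hG, ?_⟩
  filter_upwards [hfF, hgG, Lp.coeFn_add f g] with z hfz hgz hz
  rw [hz, Pi.add_apply, hfz, hgz, Pi.add_apply]

lemma IsBergmanFun.const_smul (c : ℂ) {f : Lp ℂ 2 μ} (hf : IsBergmanFun Ω μ f) :
    IsBergmanFun Ω μ (c • f) := by
  obtain ⟨F, hF, hfF⟩ := hf
  refine ⟨c • F, hF.const_smul c, ?_⟩
  filter_upwards [hfF, Lp.coeFn_smul c f] with z hfz hz
  rw [hz, Pi.smul_apply, hfz, Pi.smul_apply]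

lemma IsBergmanFun.mulL {w : CE n → ℂ} (hw : DifferentiableOn ℂ w Ω) {g : Lp ℂ ∞ μ}
    (hgw : g =ᵐ[μ] w) {f : Lp ℂ 2 μ} (hf : IsBergmanFun Ω μ f) :
    IsBergmanFun Ω μ (mulL μ g f) := by
  obtain ⟨F, hF, hfF⟩ := hf
  refine ⟨fun z => w z * F z, hw.mul hF, ?_⟩
  filter_upwards [coeFn_mulL g f, hgw, hfF] with z hz hgz hfz
  rw [hz, hgz, hfz]

variable (Ω μ) in
def bergmanSubspace : Submodule ℂ (Lp ℂ 2 μ) where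
  carrier := bergmanSet Ω μ
  add_mem' := IsBergmanFun.add
  zero_mem' := ⟨0, differentiableOn_const 0, Lp.coeFn_zero ℂ 2 μ⟩
  smul_mem' := IsBergmanFun.const_smul

lemma compactOnSet_iff_isCompactOperator (T : Lp ℂ 2 μ →L[ℂ] Lp ℂ 2 μ) :
    CompactOnSet T (bergmanSet Ω μ) ↔
      IsCompactOperator (T ∘L (bergmanSubspace Ω μ).subtypeL) := by
  rw [← ContinuousLinearMap.coe_coe (T ∘L _),
    isCompactOperator_iff_isCompact_closure_image_closedBall _ one_pos, CompactOnSet]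
  congr!
  ext g
  constructor
  · rintro ⟨f, ⟨hfA, hf⟩, rfl⟩
    exact ⟨⟨f, hfA⟩, by simpa using hf, rfl⟩
  · rintro ⟨f, hf, rfl⟩
    exact ⟨f, ⟨f.2, by simpa using hf⟩, rfl⟩

lemma IsBergmanProjection.inner_map_eq {P : Lp ℂ 2 μ →L[ℂ] Lp ℂ 2 μ}
    (hP : IsBergmanProjection Ω μ P) (f : Lp ℂ 2 μ) {g : Lp ℂ 2 μ} (hg : IsBergmanFun Ω μ g) :
    (inner ℂ (P f) g : ℂ) = inner ℂ f g := by
  have := hP.2.2 f g hg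
  rw [inner_sub_left, sub_eq_zero] at this
  exact this.symm

lemma IsMultiplicationOp.eq_comp_mulL {φ ψ : CE n → ℂ} {M M' : Lp ℂ 2 μ →L[ℂ] Lp ℂ 2 μ}
    (hM' : IsMultiplicationOp μ (fun z => φ z * ψ z) M') (hM : IsMultiplicationOp μ φ M)
    {g : Lp ℂ ∞ μ} (hgψ : g =ᵐ[μ] ψ) : M' = M ∘L mulL μ g := by
  ext1 f
  refine Lp.ext ?_
  filter_upwards [hM' f, hM (mulL μ g f), coeFn_mulL g f, hgψ] with z hM'z hMz hgfz hgz
  rw [ContinuousLinearMap.comp_apply, hM'z, hMz, hgfz, hgz, mul_assoc]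

end Bergman

section Toeplitz

variable {n : ℕ} {Ω : Set (CE n)} {μ : Measure (CE n)} {P M : Lp ℂ 2 μ →L[ℂ] Lp ℂ 2 μ}
  {φ : CE n → ℂ}

lemma IsBergmanProjection.norm_map_mulL_conj_mul_le (hP : IsBergmanProjection Ω μ P)
    (hM : IsMultiplicationOp μ φ M) {u v w : Lp ℂ ∞ μ} (hu : u =ᵐ[μ] fun z => conj (w z) * v z)
    (hw : ∀ f, IsBergmanFun Ω μ f → IsBergmanFun Ω μ (mulL μ w f)) (f : Lp ℂ 2 μ) :
    ‖P (M (mulL μ u f))‖ ≤ ‖w‖ * ‖P (M (mulL μ v f))‖ := by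
  set y := P (M (mulL μ u f))
  have hy : IsBergmanFun Ω μ y := hP.1 _
  have hinner : (inner ℂ (M (mulL μ u f)) y : ℂ) = inner ℂ (M (mulL μ v f)) (mulL μ w y) := by
    rw [L2.inner_def, L2.inner_def]
    refine integral_congr_ae ?_
    filter_upwards [hM (mulL μ u f), coeFn_mulL u f, hu, hM (mulL μ v f), coeFn_mulL v f,
      coeFn_mulL w y] with z hMu hu_f hu_z hMv hv_f hw_y
    rw [hMu, hu_f, hu_z, hMv, hv_f, hw_y]
    simp only [RCLike.inner_apply, map_mul, Complex.conj_conj]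
    ring
  have hsq : ‖y‖ ^ 2 ≤ ‖w‖ * ‖P (M (mulL μ v f))‖ * ‖y‖ :=
    calc ‖y‖ ^ 2 = RCLike.re (inner ℂ y y : ℂ) := (inner_self_eq_norm_sq (𝕜 := ℂ) y).symm
      _ = RCLike.re (inner ℂ (P (M (mulL μ v f))) (mulL μ w y) : ℂ) := by
        rw [hP.inner_map_eq _ hy, hinner, hP.inner_map_eq _ (hw y hy)]
      _ ≤ ‖P (M (mulL μ v f))‖ * ‖mulL μ w y‖ :=
        (RCLike.re_le_norm _).trans (norm_inner_le_norm _ _)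
      _ ≤ ‖P (M (mulL μ v f))‖ * (‖w‖ * ‖y‖) := by gcongr; exact norm_mulL_apply_le w y
      _ = ‖w‖ * ‖P (M (mulL μ v f))‖ * ‖y‖ := by ring
  have hC : 0 ≤ ‖w‖ * ‖P (M (mulL μ v f))‖ := by positivity
  nlinarith [norm_nonneg y]

lemma IsBergmanProjection.isCompactOperator_mulL_conj_mul (hP : IsBergmanProjection Ω μ P)
    (hM : IsMultiplicationOp μ φ M)
    (hT : IsCompactOperator ((P ∘L M) ∘L (bergmanSubspace Ω μ).subtypeL))
    {u v w : Lp ℂ ∞ μ} (hu : u =ᵐ[μ] fun z => conj (w z) * v z)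
    (hw : ∀ f, IsBergmanFun Ω μ f → IsBergmanFun Ω μ (mulL μ w f))
    (hv : ∀ f, IsBergmanFun Ω μ f → IsBergmanFun Ω μ (mulL μ v f)) :
    IsCompactOperator ((P ∘L M ∘L mulL μ u) ∘L (bergmanSubspace Ω μ).subtypeL) := by
  have hTv : IsCompactOperator ((P ∘L M ∘L mulL μ v) ∘L (bergmanSubspace Ω μ).subtypeL) :=
    hT.comp_clm (((mulL μ v) ∘L (bergmanSubspace Ω μ).subtypeL).codRestrict _ fun f => hv f f.2)
  exact IsCompactOperator.of_norm_le (S := ((P ∘L M ∘L mulL μ u) ∘L _ : _ →L[ℂ] _).toLinearMap)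
    hTv ‖w‖ fun f => hP.norm_map_mulL_conj_mul_le hM hu hw f

end Toeplitz

section StoneWeierstrass

variable {n : ℕ} {K : Set (CE n)}

variable (K) in
def coordinateFunctions : Set C(K, ℂ) :=
  Set.range fun i : Fin n => (⟨EuclideanSpace.proj i, by fun_prop⟩ : C(CE n, ℂ)).restrict K

lemma exists_conj_mul_of_mem_closure_coordinateFunctions {q : C(K, ℂ)}
    (hq : q ∈ Submonoid.closure (coordinateFunctions K ∪ star coordinateFunctions K)) :
    ∃ w v : CE n → ℂ, Differentiable ℂ w ∧ Differentiable ℂ v ∧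
      ∀ x : K, q x = conj (w x) * v x := by
  induction hq using Submonoid.closure_induction with
  | mem q hq =>
    rcases hq with ⟨i, rfl⟩ | ⟨i, hi⟩
    · exact ⟨1, EuclideanSpace.proj i, differentiable_const 1,
        (EuclideanSpace.proj (𝕜 := ℂ) i).differentiable, fun x => by simp⟩
    · refine ⟨EuclideanSpace.proj i, 1, (EuclideanSpace.proj (𝕜 := ℂ) i).differentiable,
        differentiable_const 1, fun x => ?_⟩
      rw [← star_star q, ← hi]
      simp
  | one => exact ⟨1, 1, differentiable_const 1, differentiable_const 1, fun x => by simp⟩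
  | mul q q' _ _ ih ih' =>
    obtain ⟨w, v, hw, hv, hq⟩ := ih
    obtain ⟨w', v', hw', hv', hq'⟩ := ih'
    refine ⟨w * w', v * v', hw.mul hw', hv.mul hv', fun x => ?_⟩
    simp only [ContinuousMap.mul_apply, hq, hq', Pi.mul_apply, map_mul]
    ring

lemma topologicalClosure_adjoin_coordinateFunctions [CompactSpace K] :
    (StarAlgebra.adjoin ℂ (coordinateFunctions K)).topologicalClosure = ⊤ := by
  refine ContinuousMap.starSubalgebra_topologicalClosure_eq_top_of_separatesPoints _ ?_
  intro x y hxy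
  obtain ⟨i, hi⟩ : ∃ i, (x : CE n) i ≠ (y : CE n) i := by
    by_contra! h
    exact hxy (Subtype.ext (PiLp.ext h))
  exact ⟨_, ⟨_, StarAlgebra.subset_adjoin ℂ _ ⟨i, rfl⟩, rfl⟩, by simpa using hi⟩

lemma mem_of_isClosed_of_conj_mul_mem [CompactSpace K] {N : Submodule ℂ C(K, ℂ)}
    (hN : IsClosed (N : Set C(K, ℂ)))
    (hmem : ∀ (q : C(K, ℂ)) (w v : CE n → ℂ), Differentiable ℂ w → Differentiable ℂ v →
      (∀ x : K, q x = conj (w x) * v x) → q ∈ N)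
    (q : C(K, ℂ)) : q ∈ N := by
  have hadjoin : (StarAlgebra.adjoin ℂ (coordinateFunctions K) : Set C(K, ℂ)) ⊆ N := by
    change Subalgebra.toSubmodule (StarAlgebra.adjoin ℂ _).toSubalgebra ≤ N
    rw [StarAlgebra.adjoin_eq_span, Submodule.span_le]
    intro q hq
    obtain ⟨w, v, hw, hv, hq⟩ := exists_conj_mul_of_mem_closure_coordinateFunctions hq
    exact hmem q w v hw hv hq
  have := closure_minimal hadjoin hN
  rw [← StarSubalgebra.topologicalClosure_coe, topologicalClosure_adjoin_coordinateFunctions]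
    at this
  exact this trivial

end StoneWeierstrass

theorem IsBergmanProjection.isCompactOperator_mulL_toLinfty {n : ℕ} {Ω K : Set (CE n)}
    [CompactSpace K] {μ : Measure (CE n)} {P M : Lp ℂ 2 μ →L[ℂ] Lp ℂ 2 μ} {φ : CE n → ℂ}
    (hP : IsBergmanProjection Ω μ P) (hM : IsMultiplicationOp μ φ M)
    (hT : IsCompactOperator ((P ∘L M) ∘L (bergmanSubspace Ω μ).subtypeL))
    (hK : MeasurableSet K) (hμK : ∀ᵐ z ∂μ, z ∈ K) (q : C(K, ℂ)) :
    IsCompactOperator ((P ∘L M ∘L mulL μ (toLinfty μ hK q)) ∘L (bergmanSubspace Ω μ).subtypeL) := by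
  set A := bergmanSubspace Ω μ
  let toeplitz := (P ∘L M).sandwichL A.subtypeL ∘L mulL μ ∘L toLinfty μ hK
  let N := (compactOperator (RingHom.id ℂ) A (Lp ℂ 2 μ)).comap toeplitz.toLinearMap
  have hN : IsClosed (N : Set C(K, ℂ)) :=
    isClosed_setOfPred_isCompactOperator.preimage toeplitz.continuous
  refine mem_of_isClosed_of_conj_mul_mem hN (fun q w v hw hv hq => ?_) q
  have hE {q : C(K, ℂ)} {f : CE n → ℂ} (hqf : ∀ x : K, q x = f x) : toLinfty μ hK q =ᵐ[μ] f :=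
    toLinfty_ae_eq hK hμK hqf
  let W := (⟨w, hw.continuous⟩ : C(CE n, ℂ)).restrict K
  let V := (⟨v, hv.continuous⟩ : C(CE n, ℂ)).restrict K
  have hW : toLinfty μ hK W =ᵐ[μ] w := hE fun _ => rfl
  have hV : toLinfty μ hK V =ᵐ[μ] v := hE fun _ => rfl
  refine hP.isCompactOperator_mulL_conj_mul hM hT (u := toLinfty μ hK q) ?_
    (fun f hf => hf.mulL hw.differentiableOn hW) (fun f hf => hf.mulL hv.differentiableOn hV)
  filter_upwards [hE (f := fun z => conj (w z) * v z) hq, hW, hV] with z hqz hWz hVz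
  rw [hqz, hWz, hVz]

theorem statement4_general {n : ℕ} (Ω : Set (CE n))
    (hbdd : IsBounded Ω) (h : CE n → ℝ)
    (ψ : CE n → ℂ) (hψ : ContinuousOn ψ (closure Ω))
    (φ : CE n → ℂ)
    (P M M' : Lp ℂ 2 (wMeasure Ω h) →L[ℂ] Lp ℂ 2 (wMeasure Ω h))
    (hP : IsBergmanProjection Ω (wMeasure Ω h) P)
    (hM : IsMultiplicationOp (wMeasure Ω h) φ M)
    (hM' : IsMultiplicationOp (wMeasure Ω h) (fun z => φ z * ψ z) M')
    (hT : CompactOnSet (P ∘L M) (bergmanSet Ω (wMeasure Ω h))) :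
    CompactOnSet (P ∘L M') (bergmanSet Ω (wMeasure Ω h)) := by
  have hK : MeasurableSet (closure Ω) := isClosed_closure.measurableSet
  have hμK : ∀ᵐ z ∂wMeasure Ω h, z ∈ closure Ω :=
    (withDensity_absolutelyContinuous _ _).ae_le
      (ae_restrict_of_ae_restrict_of_subset subset_closure (ae_restrict_mem hK))
  have : CompactSpace (closure Ω) := isCompact_iff_compactSpace.mp hbdd.isCompact_closure
  let ψK : C(closure Ω, ℂ) := ⟨(closure Ω).domRestrict ψ, hψ.domRestrict⟩
  have hψK : toLinfty (wMeasure Ω h) hK ψK =ᵐ[wMeasure Ω h] ψ :=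
    toLinfty_ae_eq hK hμK fun _ => rfl
  rw [compactOnSet_iff_isCompactOperator] at hT ⊢
  rw [hM'.eq_comp_mulL hM hψK]
  exact hP.isCompactOperator_mulL_toLinfty hM hT hK hμK ψK

theorem statement4 {n : ℕ} (Ω : Set (CE n)) (hΩ : IsOpen Ω) (hconn : IsConnected Ω)
    (hbdd : IsBounded Ω) (h : CE n → ℝ) (hhc : ContinuousOn h Ω) (hhpos : ∀ z ∈ Ω, 0 < h z)
    (ψ : CE n → ℂ) (hψ : ContinuousOn ψ (closure Ω))
    (φ : CE n → ℂ) (hφ : MemLp φ ⊤ (wMeasure Ω h))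
    (P M M' : Lp ℂ 2 (wMeasure Ω h) →L[ℂ] Lp ℂ 2 (wMeasure Ω h))
    (hP : IsBergmanProjection Ω (wMeasure Ω h) P)
    (hM : IsMultiplicationOp (wMeasure Ω h) φ M)
    (hM' : IsMultiplicationOp (wMeasure Ω h) (fun z => φ z * ψ z) M')
    (hT : CompactOnSet (P ∘L M) (bergmanSet Ω (wMeasure Ω h))) :
    CompactOnSet (P ∘L M') (bergmanSet Ω (wMeasure Ω h)) :=
  statement4_general Ω hbdd h ψ hψ φ P M M' hP hM hM' hT
end
end

section
/- Let X and Y be Hilbert spaces and T : X → Y a bounded linear map. Then T is compact if and only if for every ε > 0 there exist a Hilbert space Z_ε, a compact linear map S_ε : X → Z_ε, and a constant C_ε > 0 such that ‖Tf‖_Y ≤ ε‖f‖_X + C_ε‖S_ε f‖_{Z_ε} for all f ∈ X. -/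
/-! If `‖T f‖ ≤ ε ‖f‖ + C ‖S f‖` with `S` compact, then points of the unit ball whose images
under `S` form a fine net have images under `T` forming a net of `T (closedBall 0 1)` of mesh
barely above `2 ε`. As `ε` is arbitrary, `T (closedBall 0 1)` is totally bounded. -/

open Metric Set

theorem exists_finite_cover_image_of_dist_le_add_mul_dist {α β γ : Type*}
    [PseudoMetricSpace β] [PseudoMetricSpace γ] {f : α → β} {g : α → γ} {s : Set α}
    (hg : TotallyBounded (g '' s)) {r C δ : ℝ} (hC : 0 ≤ C) (hrδ : r < δ)
    (hfg : ∀ x ∈ s, ∀ y ∈ s, dist (f x) (f y) ≤ r + C * dist (g x) (g y)) :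
    ∃ t : Set β, t.Finite ∧ f '' s ⊆ ⋃ z ∈ t, ball z δ := by
  obtain ⟨η, hη_pos, hCη⟩ := exists_pos_mul_lt (sub_pos.2 hrδ) C
  obtain ⟨v, hvs, hv, hcover⟩ :=
    exists_subset_image_finite_and.1 (finite_approx_of_totallyBounded hg η hη_pos)
  refine ⟨f '' v, hv.image f, ?_⟩
  rintro _ ⟨x, hx, rfl⟩
  obtain ⟨_, ⟨y, hy, rfl⟩, hxy⟩ : ∃ z ∈ g '' v, g x ∈ ball z η := by
    simpa only [mem_iUnion₂, exists_prop] using hcover (mem_image_of_mem g hx)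
  refine mem_biUnion (mem_image_of_mem f hy) (mem_ball.2 ?_)
  calc dist (f x) (f y) ≤ r + C * dist (g x) (g y) := hfg x hx y (hvs hy)
    _ ≤ r + C * η := by gcongr; exact (mem_ball.1 hxy).le
    _ < δ := by linarith

theorem exists_finite_cover_image_closedBall_of_norm_le_add {𝕜 E F G : Type*}
    [NontriviallyNormedField 𝕜] [SeminormedAddCommGroup E] [NormedSpace 𝕜 E]
    [SeminormedAddCommGroup F] [NormedSpace 𝕜 F]
    [NormedAddCommGroup G] [NormedSpace 𝕜 G] {T : E →L[𝕜] F} {S : E →L[𝕜] G}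
    (hS : IsCompactOperator S) {ε C δ : ℝ} (hε : 0 ≤ ε) (hC : 0 ≤ C) (hεδ : 2 * ε < δ)
    (hTS : ∀ f, ‖T f‖ ≤ ε * ‖f‖ + C * ‖S f‖) :
    ∃ t : Set F, t.Finite ∧ T '' closedBall 0 1 ⊆ ⋃ z ∈ t, ball z δ := by
  have hSB : TotallyBounded (S '' closedBall 0 1) :=
    totallyBounded_closure.1 (hS.isCompact_closure_image_closedBall 1).totallyBounded
  refine exists_finite_cover_image_of_dist_le_add_mul_dist hSB hC hεδ fun x hx y hy => ?_
  have hxy : ‖x - y‖ ≤ 2 := by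
    have := norm_sub_le x y
    rw [mem_closedBall_zero_iff] at hx hy
    linarith
  calc dist (T x) (T y) = ‖T (x - y)‖ := by rw [dist_eq_norm, map_sub]
    _ ≤ ε * ‖x - y‖ + C * ‖S (x - y)‖ := hTS _
    _ ≤ 2 * ε + C * dist (S x) (S y) := by
        rw [map_sub, dist_eq_norm (S x)]
        nlinarith

theorem statement17_general {X : Type} {Y : Type}
    [NormedAddCommGroup X] [InnerProductSpace ℂ X]
    [NormedAddCommGroup Y] [InnerProductSpace ℂ Y] [CompleteSpace Y]
    (T : X →L[ℂ] Y) :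
    IsCompactOperator T ↔
      ∀ ε > (0 : ℝ), ∃ (Z : Type) (_ : NormedAddCommGroup Z) (_ : InnerProductSpace ℂ Z)
        (_ : CompleteSpace Z) (S : X →L[ℂ] Z) (C : ℝ),
          IsCompactOperator S ∧ 0 < C ∧ ∀ f : X, ‖T f‖ ≤ ε * ‖f‖ + C * ‖S f‖ := by
  constructor
  · intro hT ε hε
    refine ⟨Y, inferInstance, inferInstance, inferInstance, T, 1, hT, one_pos, fun f => ?_⟩
    rw [one_mul]
    exact le_add_of_nonneg_left (by positivity)
  · intro h
    refine (isCompactOperator_iff_isCompact_closure_image_closedBall (T : X →ₗ[ℂ] Y)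
      zero_lt_one).2 ?_
    refine (totallyBounded_closure.2 ?_).isCompact_of_isClosed isClosed_closure
    refine Metric.totallyBounded_iff.2 fun δ hδ => ?_
    obtain ⟨Z, _, _, _, S, C, hS, hC, hTS⟩ := h (δ / 3) (by positivity)
    exact exists_finite_cover_image_closedBall_of_norm_le_add hS (by positivity) hC.le
      (by linarith) hTS

theorem statement17 {X : Type} {Y : Type}
    [NormedAddCommGroup X] [InnerProductSpace ℂ X] [CompleteSpace X]
    [NormedAddCommGroup Y] [InnerProductSpace ℂ Y] [CompleteSpace Y]
    (T : X →L[ℂ] Y) :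
    IsCompactOperator T ↔
      ∀ ε > (0 : ℝ), ∃ (Z : Type) (_ : NormedAddCommGroup Z) (_ : InnerProductSpace ℂ Z)
        (_ : CompleteSpace Z) (S : X →L[ℂ] Z) (C : ℝ),
          IsCompactOperator S ∧ 0 < C ∧ ∀ f : X, ‖T f‖ ≤ ε * ‖f‖ + C * ‖S f‖ :=
  statement17_general T
end
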